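/- arXiv:1809.01588 — 6 statements merged into one kernel-verified Lean document; each statement's English description precedes it below -/
import Mathlib

section
/- Let T ∈ ℝ^{m×m×m} be a tensor with entries t_{ijk}. Define the m²×m² matrix J₁ with rows indexed by pairs (i,j) and columns indexed by pairs (u,v), with entries J₁((i,j),(u,v)) = δ_{ui} t_{vj1} + δ_{uj} t_{iv1} + δ_{u1} t_{ijv}, where δ is the Kronecker delta and the third index 1 denotes the first index value. If J₁ is invertible, then the stabilizer of T under the congruence action, i.e. the set { X ∈ GL(m,ℝ) : [[T; X, X, X]] = T }, is a finite set. -/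
open Matrix

/-- The congruence action of an `m × m` matrix on an `m × m × m` tensor over `ℝ`. -/
def congrAct3 {m d : ℕ} (T : Fin m → Fin m → Fin m → ℝ)
    (X : Matrix (Fin d) (Fin m) ℝ) : Fin d → Fin d → Fin d → ℝ :=
  fun α β γ => ∑ i, ∑ j, ∑ k, T i j k * X α i * X β j * X γ k

/-!
The stabilizer consists of common zeros of the polynomials `slicePoly T p` (the entries
`(α, β, 1)` of `[[T; X, X, X]] - T`, in the entries of `X` as variables). At a point `x` of the
stabilizer, the Jacobian of this system times `1 ⊗ xᵀ` (the matrix of `Z ↦ Z x`) equals, by the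
chain rule, `J₁` built from `[[T; x, x, x]] = T`, so the Jacobian is invertible there. The vanishing
ideal `𝔪` of a common zero with invertible Jacobian satisfies `𝔪 ≤ I ⊔ 𝔪²` by first-order Taylor
expansion, where `I` is the ideal of the system; by Nakayama `𝔪` is then a minimal prime over `I`,
and a Noetherian ring has only finitely many of those.
-/

open scoped Kronecker

theorem Ideal.mem_minimalPrimes_of_le_sq {A : Type*} [CommRing A] [IsNoetherianRing A]
    {P : Ideal A} [hP : P.IsPrime] (h : P ≤ P ^ 2) : P ∈ minimalPrimes A := by
  obtain ⟨r, hr1, hr0⟩ := Submodule.exists_sub_one_mem_and_smul_eq_zero_of_fg_of_le_smul P P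
    (IsNoetherian.noetherian P) (by rwa [smul_eq_mul, ← pow_two])
  refine ⟨⟨hP, bot_le⟩, fun Q ⟨hQ, _⟩ hQP y hy => ?_⟩
  have hrQ : r ∉ Q := fun hr => hP.ne_top <| (Ideal.eq_top_iff_one P).2 <| by
    simpa using P.sub_mem (hQP hr) hr1
  have hry : r * y ∈ Q := by
    rw [← smul_eq_mul, hr0 y hy]
    exact Q.zero_mem
  exact (hQ.mem_or_mem hry).resolve_left hrQ

theorem Ideal.mem_minimalPrimes_of_le_sup_sq {A : Type*} [CommRing A] [IsNoetherianRing A]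
    {I P : Ideal A} [P.IsPrime] (hIP : I ≤ P) (h : P ≤ I ⊔ P ^ 2) : P ∈ I.minimalPrimes := by
  have hker : RingHom.ker (Ideal.Quotient.mk I) ≤ P := by rwa [Ideal.mk_ker]
  have := Ideal.map_isPrime_of_surjective Ideal.Quotient.mk_surjective hker
  have hsq : P.map (Ideal.Quotient.mk I) ≤ P.map (Ideal.Quotient.mk I) ^ 2 :=
    calc P.map (Ideal.Quotient.mk I) ≤ (I ⊔ P ^ 2).map (Ideal.Quotient.mk I) := Ideal.map_mono h
      _ = P.map (Ideal.Quotient.mk I) ^ 2 := by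
        rw [Ideal.map_sup, Ideal.map_quotient_self, bot_sup_eq, Ideal.map_pow]
  rw [Ideal.minimalPrimes_eq_comap]
  exact ⟨_, Ideal.mem_minimalPrimes_of_le_sq hsq,
    by rw [Ideal.comap_map_of_surjective' _ Ideal.Quotient.mk_surjective, sup_eq_left.2 hker]⟩

namespace MvPolynomial

variable {R σ ι : Type*} [CommRing R]

noncomputable def jacobianAt (f : ι → MvPolynomial σ R) (x : σ → R) : Matrix ι σ R :=
  .of fun i q => eval x (pderiv q (f i))

theorem sub_C_eval_sub_sum_pderiv_mem_sq_ker_eval [Fintype σ] (x : σ → R)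
    (f : MvPolynomial σ R) :
    f - C (eval x f) - ∑ q, C (eval x (pderiv q f)) * (X q - C (x q))
      ∈ RingHom.ker (eval x) ^ 2 := by
  classical
  have hY : ∀ q, X q - C (x q) ∈ RingHom.ker (eval x) := fun q => by simp
  induction f using MvPolynomial.induction_on with
  | C a => simp
  | add f g hf hg =>
    convert add_mem hf hg using 1
    simp only [map_add, add_mul, Finset.sum_add_distrib]
    ring
  | mul_X f s hf =>
    set L := ∑ q, C (eval x (pderiv q f)) * (X q - C (x q))
    have hL : L ∈ RingHom.ker (eval x) := sum_mem fun q _ => Ideal.mul_mem_left _ _ (hY q)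
    have hlin : ∑ q, C (eval x (pderiv q (f * X s))) * (X q - C (x q))
        = C (x s) * L + C (eval x f) * (X s - C (x s)) := by
      simp [L, Derivation.leibniz, pderiv_X, Pi.single_apply, apply_ite, add_mul,
        Finset.sum_add_distrib, Finset.mul_sum, mul_assoc, add_comm]
    have hLY : L * (X s - C (x s)) ∈ RingHom.ker (eval x) ^ 2 :=
      pow_two (RingHom.ker (eval x)) ▸ Ideal.mul_mem_mul hL (hY s)
    rw [hlin]
    convert add_mem (Ideal.mul_mem_right (X s) _ hf) hLY using 1
    simp only [eval_X, map_mul]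
    ring

theorem ker_eval_injective : Function.Injective fun x : σ → R => RingHom.ker (eval x) := by
  intro x y h
  funext q
  have : X q - C (x q) ∈ RingHom.ker (eval y) := by
    rw [← show RingHom.ker (eval x) = RingHom.ker (eval y) from h]
    simp
  simpa [sub_eq_zero, eq_comm] using this

theorem ker_eval_mem_minimalPrimes [IsDomain R] [IsNoetherianRing R] [Fintype σ] [DecidableEq σ]
    [Fintype ι] {f : ι → MvPolynomial σ R} {x : σ → R} (hf : ∀ i, eval x (f i) = 0)
    {B : Matrix σ ι R} (hB : B * jacobianAt f x = 1) :
    RingHom.ker (eval x) ∈ (Ideal.span (Set.range f)).minimalPrimes := by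
  set M := RingHom.ker (eval x)
  set I := Ideal.span (Set.range f)
  set Y : σ → MvPolynomial σ R := fun q => X q - C (x q)
  have hIM : I ≤ M := Ideal.span_le.2 <| Set.range_subset_iff.2 hf
  have hlin : ∀ i, ((jacobianAt f x).map C *ᵥ Y) i ∈ I ⊔ M ^ 2 := fun i => by
    have htaylor := sub_C_eval_sub_sum_pderiv_mem_sq_ker_eval x (f i)
    rw [hf i, map_zero, sub_zero] at htaylor
    have := Submodule.sub_mem (I ⊔ M ^ 2)
      (Ideal.mem_sup_left (Ideal.subset_span (Set.mem_range_self i))) (Ideal.mem_sup_right htaylor)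
    simpa [Matrix.mulVec, dotProduct, jacobianAt, Y] using this
  have hY : ∀ q, Y q ∈ I ⊔ M ^ 2 := fun q => by
    have hBJ : B.map C *ᵥ ((jacobianAt f x).map C *ᵥ Y) = Y := by
      rw [Matrix.mulVec_mulVec, ← Matrix.map_mul, hB, Matrix.map_one _ C.map_zero C.map_one,
        Matrix.one_mulVec]
    rw [← hBJ]
    exact Ideal.sum_mem _ fun i _ => Ideal.mul_mem_left _ _ (hlin i)
  have : M.IsPrime := RingHom.ker_isPrime (eval x)
  refine Ideal.mem_minimalPrimes_of_le_sup_sq hIM fun g hg => ?_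
  have htaylor := sub_C_eval_sub_sum_pderiv_mem_sq_ker_eval x g
  rw [RingHom.mem_ker.1 hg, map_zero, sub_zero] at htaylor
  have hlin_g : ∑ q, C (eval x (pderiv q g)) * Y q ∈ I ⊔ M ^ 2 :=
    Ideal.sum_mem _ fun q _ => Ideal.mul_mem_left _ _ (hY q)
  simpa [Y] using add_mem (Ideal.mem_sup_right htaylor) hlin_g

theorem finite_setOf_zeros_of_jacobianAt_leftInvertible [IsDomain R] [IsNoetherianRing R]
    [Fintype σ] [DecidableEq σ] [Fintype ι] (f : ι → MvPolynomial σ R) :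
    {x : σ → R | (∀ i, eval x (f i) = 0) ∧ ∃ B : Matrix σ ι R, B * jacobianAt f x = 1}.Finite :=
  Set.Finite.of_finite_image
    ((Ideal.span (Set.range f)).finite_minimalPrimes_of_isNoetherianRing.subset <|
      Set.image_subset_iff.2 fun _ ⟨hx, _, hB⟩ => ker_eval_mem_minimalPrimes hx hB)
    ker_eval_injective.injOn

section MatrixVariables

variable {n : Type*} [Fintype n] [DecidableEq n]

theorem sum_smul_pderiv_X (x : Matrix n n R) (a b c i : n) :
    (∑ v, x b v • pderiv (a, v) : Derivation R (MvPolynomial (n × n) R) _) (X (c, i))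
      = C ((if c = a then 1 else 0) * x b i) := by
  rw [← Derivation.coeFnAddMonoidHom_apply, map_sum, Finset.sum_apply]
  simp [pderiv_X, Pi.single_apply, Prod.ext_iff, ite_and, Derivation.coeFnAddMonoidHom_apply,
    smul_eq_C_mul, apply_ite C]

theorem jacobianAt_mul_one_kronecker_transpose_apply (f : ι → MvPolynomial (n × n) R)
    (y : n × n → R) (x : Matrix n n R) (p : ι) (q : n × n) :
    (jacobianAt f y * ((1 : Matrix n n R) ⊗ₖ xᵀ)) p q =
      eval y ((∑ v, x q.2 v • pderiv (q.1, v) : Derivation R (MvPolynomial (n × n) R) _) (f p)) :=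
  calc _ = ∑ v, jacobianAt f y p (q.1, v) * x q.2 v := by
        simp only [mul_apply, kroneckerMap_apply, one_apply, transpose_apply, ite_mul, one_mul,
          zero_mul, mul_ite, mul_zero, Fintype.sum_prod_type, Finset.sum_ite_irrel,
          Finset.sum_const_zero, Finset.sum_ite_eq', Finset.mem_univ, if_true]
    _ = _ := by
        rw [← Derivation.coeFnAddMonoidHom_apply, map_sum, Finset.sum_apply, map_sum]
        simp [jacobianAt, Derivation.coeFnAddMonoidHom_apply, smul_eq_C_mul, mul_comm]

end MatrixVariables

end MvPolynomial

open MvPolynomial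

section Stabilizer

variable {m : ℕ} [NeZero m]

noncomputable def slicePoly (T : Fin m → Fin m → Fin m → ℝ) (p : Fin m × Fin m) :
    MvPolynomial (Fin m × Fin m) ℝ :=
  ∑ i, ∑ j, ∑ k, C (T i j k) * X (p.1, i) * X (p.2, j) * X (0, k) - C (T p.1 p.2 0)

/-- The Jacobian of `slicePoly T` at the identity matrix. -/
def J₁ (T : Fin m → Fin m → Fin m → ℝ) : Matrix (Fin m × Fin m) (Fin m × Fin m) ℝ :=
  of fun p q =>
    (if q.1 = p.1 then T q.2 p.2 0 else 0) +
    (if q.1 = p.2 then T p.1 q.2 0 else 0) +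
    (if q.1 = 0 then T p.1 p.2 q.2 else 0)

theorem eval_slicePoly (T : Fin m → Fin m → Fin m → ℝ) (x : Matrix (Fin m) (Fin m) ℝ)
    (p : Fin m × Fin m) :
    eval (Function.uncurry x) (slicePoly T p) = congrAct3 T x p.1 p.2 0 - T p.1 p.2 0 := by
  simp [slicePoly, congrAct3, Function.uncurry]

theorem jacobianAt_slicePoly_mul_one_kronecker_transpose (T : Fin m → Fin m → Fin m → ℝ)
    (x : Matrix (Fin m) (Fin m) ℝ) :
    jacobianAt (slicePoly T) (Function.uncurry x) * (1 ⊗ₖ xᵀ) = J₁ (congrAct3 T x) := by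
  ext p q
  rw [jacobianAt_mul_one_kronecker_transpose_apply]
  calc _ = ∑ i, ∑ j, ∑ k,
          ((if p.1 = q.1 then 1 else 0) * (T i j k * x q.2 i * x p.2 j * x 0 k) +
            (if p.2 = q.1 then 1 else 0) * (T i j k * x p.1 i * x q.2 j * x 0 k) +
            (if 0 = q.1 then 1 else 0) * (T i j k * x p.1 i * x p.2 j * x q.2 k)) := by
        simp only [slicePoly, map_sub, map_sum, Derivation.leibniz, derivation_C,
          sum_smul_pderiv_X, smul_eq_mul, map_add, map_mul, eval_X, eval_C, sub_zero, mul_zero,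
          add_zero]
        refine Finset.sum_congr rfl fun i _ => Finset.sum_congr rfl fun j _ =>
          Finset.sum_congr rfl fun k _ => ?_
        simp only [Function.uncurry]
        ring
    _ = J₁ (congrAct3 T x) p q := by
        simp only [Finset.sum_add_distrib, ← Finset.mul_sum]
        simp [J₁, congrAct3, eq_comm]

end Stabilizer

/-- The Jacobian criterion: if the `m² × m²` matrix `J₁` with entries
`J₁((i,j),(u,v)) = δ_{ui} t_{vj1} + δ_{uj} t_{iv1} + δ_{u1} t_{ijv}` is invertible,
then the stabilizer of `T` under the congruence action is finite. -/
theorem stabilizer_finite_of_J1_invertible (m : ℕ) [NeZero m]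
    (T : Fin m → Fin m → Fin m → ℝ)
    (hJ : IsUnit (Matrix.of fun p q : Fin m × Fin m =>
      (if q.1 = p.1 then T q.2 p.2 0 else 0) +
      (if q.1 = p.2 then T p.1 q.2 0 else 0) +
      (if q.1 = 0 then T p.1 p.2 q.2 else 0))) :
    {X : Matrix (Fin m) (Fin m) ℝ | IsUnit X ∧ congrAct3 T X = T}.Finite := by
  obtain ⟨u, hu⟩ : IsUnit (J₁ T) := hJ
  refine ((finite_setOf_zeros_of_jacobianAt_leftInvertible (slicePoly T)).preimage
    Function.uncurry_injective.injOn).subset ?_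
  rintro (x : Matrix (Fin m) (Fin m) ℝ) ⟨-, hx⟩
  refine ⟨fun p => by rw [eval_slicePoly, hx, sub_self], (1 ⊗ₖ xᵀ) * u.inv, ?_⟩
  rw [mul_eq_one_comm, ← Matrix.mul_assoc, jacobianAt_slicePoly_mul_one_kronecker_transpose, hx,
    ← hu, u.val_inv]
end

section
/- Let 𝕂 be a field, let m ≤ d, and let T be an order-k tensor over 𝕂 of format d×⋯×d all of whose entries are zero outside the block of indices {1,…,m}^k, i.e. T_α = 0 whenever α(l) > m for some l. Suppose T = Σ_{l=1}^r v_l^{(1)} ⊗ v_l^{(2)} ⊗ ⋯ ⊗ v_l^{(k)} is a minimal decomposition, meaning r equals the rank of T. Then every vector v_l^{(j)} ∈ 𝕂^d appearing in the decomposition has all coordinates outside the first m positions equal to zero. -/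
/-- If an order-`k` tensor `T` of format `d × ⋯ × d` over a field `𝕂` has all its
entries zero outside the block of indices `{1,…,m}^k` (i.e. the first `m` index
values in each mode), then every vector appearing in a minimal decomposition of
`T` into rank-one tensors has all coordinates outside the first `m` positions
equal to zero. -/
theorem minimal_decomposition_supported_on_block {𝕂 : Type*} [Field 𝕂]
    (k m d r : ℕ) (hmd : m ≤ d) (T : (Fin k → Fin d) → 𝕂)
    (hblock : ∀ α : Fin k → Fin d, (∃ l, m ≤ (α l : ℕ)) → T α = 0)
    (v : Fin r → Fin k → Fin d → 𝕂)
    (hdec : T = fun α => ∑ l, ∏ j, v l j (α j))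
    (hnz : ∀ l j, v l j ≠ 0)
    (hmin : ∀ (r' : ℕ) (w : Fin r' → Fin k → Fin d → 𝕂),
      (T = fun α => ∑ l, ∏ j, w l j (α j)) → r ≤ r') :
    ∀ (l : Fin r) (j : Fin k) (i : Fin d), m ≤ (i : ℕ) → v l j i = 0 := by
  intro l0 j0 i0 hi0
  by_contra hne
  obtain ⟨n, rfl⟩ : ∃ n, r = n + 1 := ⟨r - 1, by have := l0.pos; omega⟩
  set c : Fin (n + 1) → 𝕂 := fun l => v l j0 i0 with hc
  set P : Fin (n + 1) → (Fin k → Fin d) → 𝕂 :=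
    fun l α => ∏ j ∈ Finset.univ.erase j0, v l j (α j) with hP
  -- splitting off the j0 factor
  have hsplit : ∀ (l : Fin (n + 1)) (α : Fin k → Fin d),
      ∏ j, v l j (α j) = v l j0 (α j0) * P l α := fun l α =>
    (Finset.mul_prod_erase Finset.univ (fun j => v l j (α j)) (Finset.mem_univ j0)).symm
  -- the key linear relation
  have hrel : ∀ β : Fin k → Fin d, ∑ l, c l * P l β = 0 := by
    intro β
    have h0 : T (Function.update β j0 i0) = 0 :=
      hblock _ ⟨j0, by simp [Function.update_self, hi0]⟩
    have h1 := congrFun hdec (Function.update β j0 i0)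
    rw [h0] at h1
    rw [show (0 : 𝕂) = ∑ l, c l * P l β from ?_]
    · rw [h1]
      refine Finset.sum_congr rfl fun l _ => ?_
      rw [hsplit]
      congr 1
      · simp [hc]
      · refine Finset.prod_congr rfl fun j hj => ?_
        rw [Function.update_of_ne (Finset.ne_of_mem_erase hj)]
  -- build a decomposition with n terms
  set w : Fin n → Fin k → Fin d → 𝕂 := fun l' j =>
    if j = j0 then
      fun i => v (l0.succAbove l') j0 i - (c (l0.succAbove l') / c l0) * v l0 j0 i
    else v (l0.succAbove l') j with hw
  have hwprod : ∀ (l' : Fin n) (α : Fin k → Fin d),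
      ∏ j, w l' j (α j)
        = v (l0.succAbove l') j0 (α j0) * P (l0.succAbove l') α
          - (c (l0.succAbove l') / c l0) * v l0 j0 (α j0) * P (l0.succAbove l') α := by
    intro l' α
    have : ∏ j, w l' j (α j) = w l' j0 (α j0) * ∏ j ∈ Finset.univ.erase j0, w l' j (α j) :=
      (Finset.mul_prod_erase Finset.univ (fun j => w l' j (α j)) (Finset.mem_univ j0)).symm
    rw [this]
    have h2 : ∏ j ∈ Finset.univ.erase j0, w l' j (α j) = P (l0.succAbove l') α := by
      refine Finset.prod_congr rfl fun j hj => ?_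
      simp [hw, Finset.ne_of_mem_erase hj]
    rw [h2]
    simp [hw]
    ring
  have hTdec : T = fun α => ∑ l', ∏ j, w l' j (α j) := by
    funext α
    have hc0 : c l0 ≠ 0 := hne
    have hsum1 : ∑ l, v l j0 (α j0) * P l α = T α := by
      rw [congrFun hdec α]
      exact Finset.sum_congr rfl fun l _ => (hsplit l α).symm
    have hsum2 := hrel α
    rw [Fin.sum_univ_succAbove (fun l => v l j0 (α j0) * P l α) l0] at hsum1
    rw [Fin.sum_univ_succAbove (fun l => c l * P l α) l0] at hsum2
    have hA : ∑ l', v (l0.succAbove l') j0 (α j0) * P (l0.succAbove l') α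
        = T α - v l0 j0 (α j0) * P l0 α := by linear_combination hsum1
    have hB : ∑ l', c (l0.succAbove l') * P (l0.succAbove l') α
        = -(c l0 * P l0 α) := by linear_combination hsum2
    have hfac : ∑ l', c (l0.succAbove l') / c l0 * v l0 j0 (α j0) * P (l0.succAbove l') α
        = v l0 j0 (α j0) / c l0 * ∑ l', c (l0.succAbove l') * P (l0.succAbove l') α := by
      rw [Finset.mul_sum]
      exact Finset.sum_congr rfl fun _ _ => by ring
    have hS : ∑ l', ∏ j, w l' j (α j)
        = (∑ l', v (l0.succAbove l') j0 (α j0) * P (l0.succAbove l') α)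
          - ∑ l', c (l0.succAbove l') / c l0 * v l0 j0 (α j0) * P (l0.succAbove l') α := by
      rw [← Finset.sum_sub_distrib]
      exact Finset.sum_congr rfl fun l' _ => hwprod l' α
    rw [hS, hfac, hA, hB]
    field_simp
    ring
  have := hmin n w hTdec
  omega
end

section
/- Let 𝕂 be ℝ or ℂ, let m ≤ d, and let C be an order-k tensor over 𝕂 of format m×⋯×m that is symmetrically concise. Let X ∈ 𝕂^{d×m} be a matrix of rank m. Then { Y ∈ 𝕂^{d×m} : [[C; X, …, X]] = [[C; Y, …, Y]] } = { XZ : Z ∈ GL(m,𝕂), [[C; Z, …, Z]] = C }, i.e. the set of matrices with the same signature tensor as X is exactly X times the stabilizer of C under the congruence action. -/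
open Matrix

/-- The congruence action of a `d × m` matrix `X` on an order-`k` tensor `C`
of format `m × ⋯ × m`. -/
def congrAct {𝕂 : Type*} [CommRing 𝕂] (k m d : ℕ) (C : (Fin k → Fin m) → 𝕂)
    (X : Matrix (Fin d) (Fin m) 𝕂) : (Fin k → Fin d) → 𝕂 :=
  fun β => ∑ α : Fin k → Fin m, C α * ∏ l, X (β l) (α l)

/-!
If `⟦C; X⟧ = ⟦C; Y⟧` and `wᵀY = 0`, contracting one mode of the common signature with `w` gives
zero; undoing `X` in the other modes with a left inverse `P` of `X` shows that `C` contracted in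
that mode with `wᵀX` vanishes, so `wᵀX = 0` by symmetric conciseness. Hence the left kernel of `Y`
lies in that of `X`, `Y` has full column rank as well, and by symmetry the two left kernels agree:
`Y = XZ` with `Z = PY` invertible. Applying `P` to `⟦C; XZ⟧ = ⟦C; X⟧` gives `⟦C; Z⟧ = C`.
-/

open Function Finset

section MultilinearMul

variable {R σ ι κ : Type*} [CommSemiring R] [Fintype σ] [DecidableEq σ] [Fintype ι]

def multilinearMul (C : (σ → ι) → R) (A : σ → Matrix κ ι R) : (σ → κ) → R :=
  fun β => ∑ α, C α * ∏ l, A l (β l) (α l)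

theorem congrAct_eq_multilinearMul {𝕂 : Type*} [CommRing 𝕂] (k m d : ℕ)
    (C : (Fin k → Fin m) → 𝕂) (X : Matrix (Fin d) (Fin m) 𝕂) :
    congrAct k m d C X = multilinearMul C (fun _ => X) :=
  rfl

theorem multilinearMul_multilinearMul [Fintype κ] {μ : Type*} (C : (σ → ι) → R)
    (A : σ → Matrix κ ι R) (B : σ → Matrix μ κ R) :
    multilinearMul (multilinearMul C A) B = multilinearMul C (fun l => B l * A l) := by
  funext β
  simp only [multilinearMul, mul_apply, Fintype.prod_sum, sum_mul, mul_sum]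
  rw [sum_comm]
  refine sum_congr rfl fun γ _ => sum_congr rfl fun α _ => ?_
  rw [prod_mul_distrib]
  ring

theorem multilinearMul_one [DecidableEq ι] (C : (σ → ι) → R) :
    multilinearMul C (fun _ => 1) = C := by
  funext β
  simp [multilinearMul, one_apply, prod_boole, ← funext_iff]

theorem multilinearMul_eq_zero {C : (σ → ι) → R} {A : σ → Matrix κ ι R} {p : σ}
    (hp : A p = 0) : multilinearMul C A = 0 := by
  funext β
  refine sum_eq_zero fun α _ => ?_
  rw [prod_eq_zero (mem_univ p) (by rw [hp, Matrix.zero_apply]), mul_zero]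

theorem multilinearMul_update_one_apply [DecidableEq ι] (C : (σ → ι) → R)
    (p : σ) (M : Matrix ι ι R) (β : σ → ι) :
    multilinearMul C (update 1 p M) β = ∑ i, M (β p) i * C (update β p i) := by
  have hprod : ∀ α : σ → ι, ∏ l, update (1 : σ → Matrix ι ι R) p M l (β l) (α l)
      = ∑ i, if α = update β p i then M (β p) i else 0 := by
    intro α
    rw [← mul_prod_erase univ _ (mem_univ p), update_self, prod_congr rfl fun l hl => by
      rw [update_of_ne (ne_of_mem_erase hl), Pi.one_apply, one_apply]]
    simp only [eq_update_iff, ite_and, mem_univ, if_true, prod_boole, mem_erase,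
      and_true, mul_ite, mul_one, mul_zero, eq_comm, sum_ite_eq']
  simp only [multilinearMul, hprod, mul_sum, mul_ite, mul_zero]
  rw [sum_comm]
  refine sum_congr rfl fun i _ => ?_
  rw [sum_ite_eq']
  simp [mul_comm]

theorem multilinearMul_update_vecMulVec_apply [DecidableEq ι] (C : (σ → ι) → R) (p : σ)
    (u v : ι → R) (β : σ → ι) :
    multilinearMul C (update 1 p (vecMulVec u v)) β = u (β p) * ∑ i, v i * C (update β p i) := by
  simp only [multilinearMul_update_one_apply, vecMulVec_apply, mul_sum, mul_assoc]

theorem multilinearMul_eq_self_of_left_inverse [Fintype κ] [DecidableEq ι] {C : (σ → ι) → R}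
    {X : Matrix κ ι R} {P : Matrix ι κ R} (hP : P * X = 1) (Z : Matrix ι ι R)
    (h : multilinearMul C (fun _ => X * Z) = multilinearMul C (fun _ => X)) :
    multilinearMul C (fun _ => Z) = C := by
  calc multilinearMul C (fun _ => Z)
      = multilinearMul (multilinearMul C (fun _ => X * Z)) (fun _ => P) := by
        simp only [multilinearMul_multilinearMul, ← Matrix.mul_assoc, hP, Matrix.one_mul]
    _ = multilinearMul C (fun _ => P * X) := by rw [h, multilinearMul_multilinearMul]
    _ = C := by simpa only [hP] using multilinearMul_one C

def IsSymmConcise (C : (σ → ι) → R) : Prop :=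
  ∀ v : ι → R, (∀ (p : σ) (α : σ → ι), ∑ i, v i * C (update α p i) = 0) → v = 0

theorem vecMul_eq_zero_of_multilinearMul_eq [Fintype κ] [DecidableEq ι] [DecidableEq κ]
    {C : (σ → ι) → R} (hC : IsSymmConcise C) {X Y : Matrix κ ι R} {P : Matrix ι κ R}
    (hP : P * X = 1) (h : multilinearMul C (fun _ => X) = multilinearMul C (fun _ => Y))
    {w : κ → R} (hw : w ᵥ* Y = 0) : w ᵥ* X = 0 := by
  refine hC _ fun p α => ?_
  -- `M` contracts mode `p` with `w`, and `P * M * X = vecMulVec u (w ᵥ* X)` with `u (α p) = 1`.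
  set u : ι → R := Pi.single (α p) 1
  set M := vecMulVec (X *ᵥ u) w
  have hXP : (fun l => P * (update (1 : σ → Matrix κ κ R) p M l * X)) =
      update (1 : σ → Matrix ι ι R) p (vecMulVec u (w ᵥ* X)) := by
    funext l
    rcases eq_or_ne l p with rfl | hl
    · rw [update_self, update_self, vecMulVec_mul, mul_vecMulVec, mulVec_mulVec, hP, one_mulVec]
    · rw [update_of_ne hl, update_of_ne hl, Pi.one_apply, Pi.one_apply, Matrix.one_mul, hP]
  have hY : multilinearMul C (fun l => P * (update (1 : σ → Matrix κ κ R) p M l * Y)) = 0 :=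
    multilinearMul_eq_zero (p := p) (by
      rw [update_self, vecMulVec_mul, hw, mul_vecMulVec]
      exact Matrix.ext fun _ _ => mul_zero _)
  calc ∑ i, (w ᵥ* X) i * C (update α p i)
      = multilinearMul C (update 1 p (vecMulVec u (w ᵥ* X))) α := by
        rw [multilinearMul_update_vecMulVec_apply]
        simp only [u, Pi.single_eq_same, one_mul]
    _ = multilinearMul (multilinearMul (multilinearMul C (fun _ => X)) (update 1 p M))
          (fun _ => P) α := by
        simp only [multilinearMul_multilinearMul, hXP]
    _ = 0 := by
        simp only [h, multilinearMul_multilinearMul, hY, Pi.zero_apply]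

end MultilinearMul

section FullColumnRank

variable {K ι κ κ' : Type*} [Field K] [Fintype ι] [Fintype κ] [Fintype κ']

theorem rank_le_rank_of_vecMul_eq_zero {A : Matrix ι κ K} {B : Matrix ι κ' K}
    (h : ∀ w, w ᵥ* A = 0 → w ᵥ* B = 0) : B.rank ≤ A.rank := by
  have hker : LinearMap.ker A.vecMulLinear ≤ LinearMap.ker B.vecMulLinear := fun w hw => h w hw
  have hA := LinearMap.finrank_range_add_finrank_ker A.vecMulLinear
  have hB := LinearMap.finrank_range_add_finrank_ker B.vecMulLinear
  have := Submodule.finrank_mono hker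
  rw [← rank_transpose A, ← rank_transpose B, rank, rank, mulVecLin_transpose, mulVecLin_transpose]
  omega

theorem exists_mul_eq_one_of_rank_eq_card [DecidableEq κ] {A : Matrix ι κ K}
    (h : A.rank = Fintype.card κ) :
    ∃ P : Matrix κ ι K, P * A = 1 := by
  refine vecMul_surjective_iff_exists_left_inverse.mp ?_
  rw [← coe_vecMulLinear, ← LinearMap.range_eq_top]
  apply Submodule.eq_top_of_finrank_eq
  rw [Module.finrank_fintype_fun_eq_card, ← h, ← rank_transpose, rank, mulVecLin_transpose]

end FullColumnRank

theorem mul_mul_eq_of_vecMul_eq_zero {R ι κ κ' : Type*} [CommRing R] [Fintype ι] [Fintype κ]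
    [DecidableEq ι] [DecidableEq κ] {A : Matrix ι κ R} {B : Matrix ι κ' R} {P : Matrix κ ι R}
    (hP : P * A = 1) (h : ∀ w, w ᵥ* A = 0 → w ᵥ* B = 0) : A * (P * B) = B := by
  have hA : (A * P - 1) * A = 0 := by
    rw [Matrix.sub_mul, Matrix.mul_assoc, hP, Matrix.mul_one, Matrix.one_mul, sub_self]
  have hB : (A * P - 1) * B = 0 :=
    funext fun i => h ((A * P - 1 : Matrix ι ι R) i) (congrFun hA i)
  rwa [Matrix.sub_mul, Matrix.one_mul, sub_eq_zero, Matrix.mul_assoc] at hB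

theorem same_signature_iff_stabilizer_general {𝕂 : Type*} [RCLike 𝕂] (k m d : ℕ)
    (C : (Fin k → Fin m) → 𝕂)
    (hconc : ∀ v : Fin m → 𝕂,
      (∀ (p : Fin k) (α : Fin k → Fin m),
        ∑ i, v i * C (Function.update α p i) = 0) → v = 0)
    (X : Matrix (Fin d) (Fin m) 𝕂) (hX : X.rank = m) :
    {Y : Matrix (Fin d) (Fin m) 𝕂 | congrAct k m d C Y = congrAct k m d C X}
      = (fun Z => X * Z) ''
          {Z : Matrix (Fin m) (Fin m) 𝕂 | IsUnit Z ∧ congrAct k m m C Z = C} := by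
  simp only [congrAct_eq_multilinearMul]
  replace hX : X.rank = Fintype.card (Fin m) := hX.trans (Fintype.card_fin m).symm
  obtain ⟨P, hP⟩ := exists_mul_eq_one_of_rank_eq_card hX
  ext Y
  constructor
  · intro hY
    have hYX : ∀ w, w ᵥ* Y = 0 → w ᵥ* X = 0 := fun _ =>
      vecMul_eq_zero_of_multilinearMul_eq hconc hP hY.symm
    obtain ⟨Q, hQ⟩ := exists_mul_eq_one_of_rank_eq_card <|
      (rank_le_card_width Y).antisymm (hX ▸ rank_le_rank_of_vecMul_eq_zero hYX)
    have hXY : ∀ w, w ᵥ* X = 0 → w ᵥ* Y = 0 := fun _ =>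
      vecMul_eq_zero_of_multilinearMul_eq hconc hQ hY
    have hfac : X * (P * Y) = Y := mul_mul_eq_of_vecMul_eq_zero hP hXY
    refine ⟨P * Y, ⟨IsUnit.of_mul_eq_one_right (Q * X) ?_, ?_⟩, hfac⟩
    · rw [Matrix.mul_assoc Q X, hfac, hQ]
    · exact multilinearMul_eq_self_of_left_inverse hP _ (by rw [hfac]; exact hY)
  · rintro ⟨Z, ⟨-, hZ⟩, rfl⟩
    show multilinearMul C (fun _ => X * Z) = _
    rw [← multilinearMul_multilinearMul, hZ]

/-- For a symmetrically concise order-`k` tensor `C` of format `m × ⋯ × m` over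
`𝕂 = ℝ` or `ℂ`, and a matrix `X ∈ 𝕂^{d×m}` of rank `m ≤ d`, the matrices `Y`
with the same signature tensor as `X` are exactly the products `XZ` where `Z`
ranges over the stabilizer of `C` under the congruence action. -/
theorem same_signature_iff_stabilizer {𝕂 : Type*} [RCLike 𝕂] (k m d : ℕ)
    (hmd : m ≤ d) (C : (Fin k → Fin m) → 𝕂)
    (hconc : ∀ v : Fin m → 𝕂,
      (∀ (p : Fin k) (α : Fin k → Fin m),
        ∑ i, v i * C (Function.update α p i) = 0) → v = 0)
    (X : Matrix (Fin d) (Fin m) 𝕂) (hX : X.rank = m) :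
    {Y : Matrix (Fin d) (Fin m) 𝕂 | congrAct k m d C Y = congrAct k m d C X}
      = (fun Z => X * Z) ''
          {Z : Matrix (Fin m) (Fin m) 𝕂 | IsUnit Z ∧ congrAct k m m C Z = C} :=
  same_signature_iff_stabilizer_general k m d C hconc X hX
end

section
/- Let 𝕂 be ℝ or ℂ, let m ≤ d, and let C be an order-k tensor over 𝕂 of format m×⋯×m that is symmetrically concise and whose stabilizer under the congruence action by GL(m,𝕂) has exactly n elements. Then for every matrix X ∈ 𝕂^{d×m} of rank m, the set { Y ∈ 𝕂^{d×m} : [[C; Y, …, Y]] = [[C; X, …, X]] } has exactly n elements. -/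
open Matrix

section Aux

variable {𝕂 : Type*} [CommRing 𝕂]

/-- Multi-matrix congruence action: one matrix per mode. -/
def mC (k : ℕ) {m d : ℕ} (C : (Fin k → Fin m) → 𝕂)
    (Xs : Fin k → Matrix (Fin d) (Fin m) 𝕂) : (Fin k → Fin d) → 𝕂 :=
  fun β => ∑ α : Fin k → Fin m, C α * ∏ l, Xs l (β l) (α l)

lemma congrAct_eq_mC (k m d : ℕ) (C : (Fin k → Fin m) → 𝕂)
    (X : Matrix (Fin d) (Fin m) 𝕂) : congrAct k m d C X = mC k C fun _ => X := rfl

lemma mC_mul {k m e d : ℕ} (C : (Fin k → Fin m) → 𝕂)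
    (Zs : Fin k → Matrix (Fin e) (Fin m) 𝕂) (As : Fin k → Matrix (Fin d) (Fin e) 𝕂) :
    mC k (mC k C Zs) As = mC k C fun l => As l * Zs l := by
  funext β
  simp only [mC, Matrix.mul_apply]
  refine Eq.symm ?_
  rw [Finset.sum_congr rfl (fun (α : Fin k → Fin m) _ => by
    rw [Finset.prod_univ_sum (fun _ => (Finset.univ : Finset (Fin e)))
      (fun l j => As l (β l) j * Zs l j (α l)), Fintype.piFinset_univ])]
  simp only [Finset.mul_sum]
  rw [Finset.sum_comm]
  refine Finset.sum_congr rfl fun γ _ => ?_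
  rw [Finset.sum_mul]
  refine Finset.sum_congr rfl fun α _ => ?_
  rw [Finset.prod_mul_distrib]
  ring

lemma mC_one {k d : ℕ} (C : (Fin k → Fin d) → 𝕂) :
    mC k C (fun _ => (1 : Matrix (Fin d) (Fin d) 𝕂)) = C := by
  funext β
  simp only [mC, Matrix.one_apply]
  rw [Finset.sum_congr rfl (fun (α : Fin k → Fin d) _ => by
    rw [Finset.prod_boole])]
  simp only [mul_ite, mul_one, mul_zero]
  have : ∀ α : Fin k → Fin d, (∀ l ∈ Finset.univ, β l = α l) ↔ β = α := by
    intro α; simp [funext_iff]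
  rw [Finset.sum_congr rfl fun α _ => by rw [if_congr (this α) rfl rfl]]
  simp

lemma mC_zero_slot {k m d : ℕ} (C : (Fin k → Fin m) → 𝕂)
    (Xs : Fin k → Matrix (Fin d) (Fin m) 𝕂) (p : Fin k) (h : Xs p = 0) :
    mC k C Xs = 0 := by
  funext β
  simp only [mC]
  rw [Finset.sum_eq_zero]
  · rfl
  intro α _
  rw [Finset.prod_eq_zero (Finset.mem_univ p) (by simp [h]), mul_zero]

lemma mC_zero {k m d : ℕ} (Xs : Fin k → Matrix (Fin d) (Fin m) 𝕂) :
    mC k (0 : (Fin k → Fin m) → 𝕂) Xs = 0 := by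
  funext β; simp [mC]

lemma mC_update_one {k d : ℕ} (C : (Fin k → Fin d) → 𝕂) (p : Fin k)
    (M : Matrix (Fin d) (Fin d) 𝕂) (β : Fin k → Fin d) :
    mC k C (Function.update (fun _ => 1) p M) β
      = ∑ j, M (β p) j * C (Function.update β p j) := by
  simp only [mC]
  rw [Finset.sum_congr rfl (fun (α : Fin k → Fin d) _ => by
    rw [← Finset.mul_prod_erase Finset.univ _ (Finset.mem_univ p)])]
  simp only [Function.update_self]
  have h1 : ∀ α : Fin k → Fin d, ∀ l ∈ Finset.univ.erase p,
      Function.update (fun _ => (1 : Matrix (Fin d) (Fin d) 𝕂)) p M l (β l) (α l)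
        = if β l = α l then 1 else 0 := by
    intro α l hl
    rw [Function.update_of_ne (Finset.mem_erase.1 hl).1, Matrix.one_apply]
  rw [Finset.sum_congr rfl (fun α _ => by
    rw [Finset.prod_congr rfl (h1 α), Finset.prod_boole])]
  simp only [mul_ite, mul_one, mul_zero]
  rw [← Finset.sum_filter]
  refine Finset.sum_nbij' (fun α => α p) (fun j => Function.update β p j) ?_ ?_ ?_ ?_ ?_
  · intro a _; exact Finset.mem_univ _
  · intro j _
    simp only [Finset.mem_filter, Finset.mem_univ, true_and]
    intro l hl
    rw [Function.update_of_ne (Finset.mem_erase.1 hl).1]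
  · intro α hα
    show Function.update β p (α p) = α
    funext l
    by_cases hl : l = p
    · subst hl; rw [Function.update_self]
    · rw [Function.update_of_ne hl]
      exact ((Finset.mem_filter.1 hα).2 l (Finset.mem_erase.2 ⟨hl, Finset.mem_univ l⟩))
  · intro j _; show Function.update β p j p = j; rw [Function.update_self]
  · intro α hα
    have hupd : Function.update β p (α p) = α := by
      funext l
      by_cases hl : l = p
      · subst hl; rw [Function.update_self]
      · rw [Function.update_of_ne hl]
        exact ((Finset.mem_filter.1 hα).2 l (Finset.mem_erase.2 ⟨hl, Finset.mem_univ l⟩))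
    show C α * M (β p) (α p) = M (β p) (α p) * C (Function.update β p (α p))
    rw [hupd]; exact mul_comm _ _

lemma prod_update_split {k m d : ℕ} (Xs : Fin k → Matrix (Fin d) (Fin m) 𝕂)
    (p : Fin k) (β : Fin k → Fin d) (j : Fin d) (α : Fin k → Fin m) :
    (∏ l, Xs l (Function.update β p j l) (α l))
      = Xs p j (α p) * ∏ l ∈ Finset.univ.erase p, Xs l (β l) (α l) := by
  rw [← Finset.mul_prod_erase Finset.univ _ (Finset.mem_univ p), Function.update_self]
  congr 1
  refine Finset.prod_congr rfl fun l hl => ?_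
  rw [Function.update_of_ne (Finset.mem_erase.1 hl).1]

lemma contract_mC {k m d : ℕ} (C : (Fin k → Fin m) → 𝕂)
    (Xs : Fin k → Matrix (Fin d) (Fin m) 𝕂)
    (w : Fin d → 𝕂) (p : Fin k) (β : Fin k → Fin d) :
    ∑ j, w j * mC k C Xs (Function.update β p j)
      = mC k C (Function.update Xs p (Matrix.of fun _ i => ∑ j, w j * Xs p j i)) β := by
  simp only [mC, Finset.mul_sum]
  rw [Finset.sum_comm]
  refine Finset.sum_congr rfl fun α _ => ?_
  rw [Finset.sum_congr rfl fun (j : Fin d) _ => by rw [prod_update_split Xs p β j α]]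
  have hr : (∏ l, Function.update Xs p (Matrix.of fun _ i => ∑ j, w j * Xs p j i) l (β l) (α l))
      = (∑ j, w j * Xs p j (α p)) * ∏ l ∈ Finset.univ.erase p, Xs l (β l) (α l) := by
    rw [← Finset.mul_prod_erase Finset.univ _ (Finset.mem_univ p), Function.update_self]
    congr 1
    refine Finset.prod_congr rfl fun l hl => ?_
    rw [Function.update_of_ne (Finset.mem_erase.1 hl).1]
  rw [hr, Finset.sum_mul, Finset.mul_sum]
  refine Finset.sum_congr rfl fun j _ => ?_
  ring

end Aux

section Field

variable {𝕂 : Type*} [Field 𝕂]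

lemma exists_left_inverse_of_rank {m d : ℕ} (X : Matrix (Fin d) (Fin m) 𝕂)
    (hX : X.rank = m) : ∃ P : Matrix (Fin m) (Fin d) 𝕂, P * X = 1 := by
  have hker : LinearMap.ker X.mulVecLin = ⊥ := by
    have h1 := X.mulVecLin.finrank_range_add_finrank_ker
    rw [Matrix.rank] at hX
    rw [hX, Module.finrank_pi, Fintype.card_fin] at h1
    have h0 : Module.finrank 𝕂 (LinearMap.ker X.mulVecLin) = 0 := by omega
    exact Submodule.finrank_eq_zero.mp h0
  obtain ⟨g, hg⟩ := (X.mulVecLin).exists_leftInverse_of_injective hker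
  refine ⟨LinearMap.toMatrix' g, ?_⟩
  apply Matrix.toLin'.injective
  rw [Matrix.toLin'_mul, Matrix.toLin'_toMatrix', Matrix.toLin'_one]
  exact hg

lemma rank_eq_of_ker_le {m d : ℕ} (X Y : Matrix (Fin d) (Fin m) 𝕂) (hX : X.rank = m)
    (h : ∀ w, vecMul w Y = 0 → vecMul w X = 0) : Y.rank = m := by
  have hker : LinearMap.ker Yᵀ.mulVecLin ≤ LinearMap.ker Xᵀ.mulVecLin := by
    intro w hw
    simp only [LinearMap.mem_ker, Matrix.mulVecLin_apply, Matrix.mulVec_transpose] at *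
    exact h w hw
  have hfin := Submodule.finrank_mono hker
  have h1 := Yᵀ.mulVecLin.finrank_range_add_finrank_ker
  have h2 := Xᵀ.mulVecLin.finrank_range_add_finrank_ker
  rw [Module.finrank_pi, Fintype.card_fin] at h1 h2
  have hYt : Yᵀ.rank + Module.finrank 𝕂 (LinearMap.ker Yᵀ.mulVecLin) = d := h1
  have hXt : Xᵀ.rank + Module.finrank 𝕂 (LinearMap.ker Xᵀ.mulVecLin) = d := h2
  rw [Matrix.rank_transpose] at hYt hXt
  have hle := Matrix.rank_le_width Y
  omega

/-- The key conciseness lemma: if `[[C; A,…,A]] = [[C; B,…,B]]` with `B` admitting a left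
inverse and `C` symmetrically concise, then every vector in the left kernel of `A`
lies in the left kernel of `B`. -/
lemma key_ker {k m d : ℕ} (hd : 0 < d) (C : (Fin k → Fin m) → 𝕂)
    (hconc : ∀ v : Fin m → 𝕂,
      (∀ (p : Fin k) (α : Fin k → Fin m),
        ∑ i, v i * C (Function.update α p i) = 0) → v = 0)
    (A B : Matrix (Fin d) (Fin m) 𝕂)
    (P : Matrix (Fin m) (Fin d) 𝕂) (hP : P * B = 1)
    (hAB : congrAct k m d C A = congrAct k m d C B)
    (w : Fin d → 𝕂) (hw : vecMul w A = 0) : vecMul w B = 0 := by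
  rw [congrAct_eq_mC, congrAct_eq_mC] at hAB
  apply hconc
  intro p α
  -- contraction of the common tensor with `w` in mode `p` vanishes (computed via `A`)
  have hzeroA : (Matrix.of fun (_ : Fin d) i => ∑ j, w j * A j i)
      = (0 : Matrix (Fin d) (Fin m) 𝕂) := by
    ext r i
    simpa [Matrix.vecMul, dotProduct] using congrFun hw i
  have hTA : ∀ β : Fin k → Fin d,
      ∑ j, w j * mC k C (fun _ => A) (Function.update β p j) = 0 := by
    intro β
    rw [contract_mC]
    rw [mC_zero_slot C _ p (by rw [Function.update_self]; exact hzeroA)]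
    rfl
  have hTB : mC k C (Function.update (fun _ => B) p
      (Matrix.of fun _ i => ∑ j, w j * B j i)) = 0 := by
    funext β
    rw [← contract_mC, ← hAB]
    exact hTA β
  -- cancel `B` in the other modes using the left inverse `P`
  set j₀ : Fin d := ⟨0, hd⟩
  set Q : Matrix (Fin m) (Fin d) 𝕂 :=
    Matrix.of fun (_ : Fin m) (j : Fin d) => if j = j₀ then (1 : 𝕂) else 0 with hQ
  have hcomp := mC_mul C
    (Function.update (fun _ => B) p (Matrix.of fun _ i => ∑ j, w j * B j i))
    (Function.update (fun _ => P) p Q)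
  rw [hTB, mC_zero] at hcomp
  have hmats : (fun l => Function.update (fun _ => P) p Q l *
        Function.update (fun _ => B) p (Matrix.of fun _ i => ∑ j, w j * B j i) l)
      = Function.update (fun _ => (1 : Matrix (Fin m) (Fin m) 𝕂)) p
          (Matrix.of fun _ i => vecMul w B i) := by
    funext l
    by_cases hl : l = p
    · subst hl
      simp only [Function.update_self]
      ext r i
      simp only [Matrix.mul_apply, Matrix.of_apply, hQ, ite_mul, one_mul, zero_mul]
      rw [Finset.sum_ite_eq' Finset.univ j₀ (fun _ => ∑ j, w j * B j i)]
      simp [Matrix.vecMul, dotProduct]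
    · simp only [Function.update_of_ne hl, hP]
  rw [hmats] at hcomp
  have := congrFun hcomp.symm α
  rw [mC_update_one] at this
  simpa [Matrix.vecMul, dotProduct] using this

end Field

/-- If a symmetrically concise order-`k` tensor `C` of format `m × ⋯ × m` over
`𝕂 = ℝ` or `ℂ` has a stabilizer under congruence with exactly `n` elements, then
for every rank-`m` matrix `X ∈ 𝕂^{d×m}` (with `m ≤ d`) there are exactly `n`
matrices `Y ∈ 𝕂^{d×m}` with the same signature tensor as `X`. -/
theorem card_same_signature_eq_card_stabilizer {𝕂 : Type*} [RCLike 𝕂]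
    (k m d n : ℕ) (hmd : m ≤ d) (C : (Fin k → Fin m) → 𝕂)
    (hconc : ∀ v : Fin m → 𝕂,
      (∀ (p : Fin k) (α : Fin k → Fin m),
        ∑ i, v i * C (Function.update α p i) = 0) → v = 0)
    (hstab : {Z : Matrix (Fin m) (Fin m) 𝕂 |
        IsUnit Z ∧ congrAct k m m C Z = C}.ncard = n)
    (X : Matrix (Fin d) (Fin m) 𝕂) (hX : X.rank = m) :
    {Y : Matrix (Fin d) (Fin m) 𝕂 |
      congrAct k m d C Y = congrAct k m d C X}.ncard = n := by
  by_cases hm : m = 0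
  · -- degenerate case: empty format
    subst hm
    haveI : Subsingleton (Matrix (Fin 0) (Fin 0) 𝕂) :=
      ⟨fun a b => by ext i j; exact i.elim0⟩
    haveI hUm : Unique (Matrix (Fin 0) (Fin 0) 𝕂) :=
      ⟨⟨1⟩, fun a => Subsingleton.elim a 1⟩
    haveI hUd : Unique (Matrix (Fin d) (Fin 0) 𝕂) :=
      ⟨⟨0⟩, fun a => by ext i j; exact j.elim0⟩
    have hstabset : {Z : Matrix (Fin 0) (Fin 0) 𝕂 |
        IsUnit Z ∧ congrAct k 0 0 C Z = C} = Set.univ := by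
      ext Z
      simp only [Set.mem_setOf_eq, Set.mem_univ, iff_true]
      constructor
      · rw [Subsingleton.elim Z 1]; exact isUnit_one
      · funext β
        rcases Nat.eq_zero_or_pos k with hk | hk
        · subst hk
          simp only [congrAct]
          rw [Finset.sum_eq_single_of_mem β (Finset.mem_univ β)]
          · simp
          · intro b _ hb
            exact absurd (Subsingleton.elim b β) hb
        · haveI : Nonempty (Fin k) := ⟨⟨0, hk⟩⟩
          exact isEmptyElim β
    have hYset : {Y : Matrix (Fin d) (Fin 0) 𝕂 |
        congrAct k 0 d C Y = congrAct k 0 d C X} = Set.univ := by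
      ext Y
      simp only [Set.mem_setOf_eq, Set.mem_univ, iff_true]
      rw [Subsingleton.elim Y X]
    rw [hstabset, Set.ncard_univ, Nat.card_unique] at hstab
    rw [hYset, Set.ncard_univ, Nat.card_unique]
    exact hstab
  by_cases hk : k = 0
  · -- impossible: conciseness fails for order-0 tensors with m > 0
    exfalso
    subst hk
    have h1 := hconc (fun _ => 1) (fun p => p.elim0)
    have : (1 : 𝕂) = 0 := congrFun h1 ⟨0, Nat.pos_of_ne_zero hm⟩
    exact one_ne_zero this
  have hd : 0 < d := lt_of_lt_of_le (Nat.pos_of_ne_zero hm) hmd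
  obtain ⟨P, hP⟩ := exists_left_inverse_of_rank X hX
  -- the set of same-signature matrices is the image of the stabilizer under `Z ↦ X * Z`
  have himg : {Y : Matrix (Fin d) (Fin m) 𝕂 |
        congrAct k m d C Y = congrAct k m d C X}
      = (fun Z => X * Z) '' {Z : Matrix (Fin m) (Fin m) 𝕂 |
          IsUnit Z ∧ congrAct k m m C Z = C} := by
    ext Y
    simp only [Set.mem_setOf_eq, Set.mem_image]
    constructor
    · intro hY
      have hkerYX : ∀ w, vecMul w Y = 0 → vecMul w X = 0 :=
        key_ker hd C hconc Y X P hP hY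
      have hrkY : Y.rank = m := rank_eq_of_ker_le X Y hX hkerYX
      obtain ⟨Q, hQ⟩ := exists_left_inverse_of_rank Y hrkY
      have hkerXY : ∀ w, vecMul w X = 0 → vecMul w Y = 0 :=
        key_ker hd C hconc X Y Q hQ hY.symm
      -- `Y = X * (P * Y)`
      have hYX : Y = X * (P * Y) := by
        have h0 : Y - X * (P * Y) = 0 := by
          ext r i
          have hw : vecMul (fun j => ((1 : Matrix (Fin d) (Fin d) 𝕂) - X * P) r j) X = 0 := by
            have hmat : ((1 : Matrix (Fin d) (Fin d) 𝕂) - X * P) * X = 0 := by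
              rw [Matrix.sub_mul, Matrix.one_mul, Matrix.mul_assoc, hP, Matrix.mul_one, sub_self]
            funext i'
            have := congrFun (congrFun hmat r) i'
            simpa [Matrix.mul_apply, Matrix.vecMul, dotProduct] using this
          have h2 := congrFun (hkerXY _ hw) i
          have h3 : (((1 : Matrix (Fin d) (Fin d) 𝕂) - X * P) * Y) r i = 0 := by
            simpa [Matrix.mul_apply, Matrix.vecMul, dotProduct] using h2
          have h4 : ((1 : Matrix (Fin d) (Fin d) 𝕂) - X * P) * Y
              = Y - X * (P * Y) := by
            rw [Matrix.sub_mul, Matrix.one_mul, Matrix.mul_assoc]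
          rw [h4] at h3
          simpa using h3
        have := sub_eq_zero.mp h0
        exact this
      refine ⟨P * Y, ⟨?_, ?_⟩, hYX.symm⟩
      · -- `P * Y` is a unit
        have hleft : (Q * X) * (P * Y) = 1 := by
          rw [Matrix.mul_assoc, ← hYX, hQ]
        have hright : (P * Y) * (Q * X) = 1 := mul_eq_one_comm.mp hleft
        exact ⟨⟨P * Y, Q * X, hright, hleft⟩, rfl⟩
      · -- `P * Y` stabilizes `C`
        have hfact : congrAct k m d C Y
            = mC k (congrAct k m m C (P * Y)) (fun _ => X) := by
          rw [congrAct_eq_mC, congrAct_eq_mC, mC_mul]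
          funext l
          exact hYX ▸ rfl
        have hcan : mC k (congrAct k m m C (P * Y)) (fun _ => X)
            = mC k C (fun _ => X) := by
          rw [← hfact, ← congrAct_eq_mC]
          exact hY
        have := congrArg (fun S => mC k S (fun _ => P)) hcan
        simpa only [mC_mul, hP, mC_one] using this
    · rintro ⟨Z, ⟨hZu, hZC⟩, rfl⟩
      rw [congrAct_eq_mC, congrAct_eq_mC]
      have : (fun _ : Fin k => X * Z)
          = fun l => (fun _ : Fin k => X) l * (fun _ : Fin k => Z) l := rfl
      rw [this, ← mC_mul,
        show mC k C (fun _ => Z) = C from by rw [← congrAct_eq_mC]; exact hZC]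
  have hinj : Set.InjOn (fun Z => X * Z) {Z : Matrix (Fin m) (Fin m) 𝕂 |
      IsUnit Z ∧ congrAct k m m C Z = C} := by
    intro Z1 _ Z2 _ h
    have := congrArg (fun M => P * M) h
    simpa only [← Matrix.mul_assoc, hP, Matrix.one_mul] using this
  rw [himg, Set.ncard_image_of_injOn hinj, hstab]
end

section
/- Let u ∈ ℝ^m be a column vector, let Q ∈ ℝ^{m×m} be skew-symmetric (Qᵀ = −Q), and set C = u uᵀ + Q. Then for any matrix X ∈ ℝ^{m×m}, one has X C Xᵀ = C if and only if (Xu = u or Xu = −u) and X Q Xᵀ = Q. -/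
/-!
Congruence by `X` maps `u uᵀ + Q` to `(Xu)(Xu)ᵀ + X Q Xᵀ`, again the sum of a symmetric and a
skew-symmetric matrix. Since this decomposition is unique, `X C Xᵀ = C` splits into
`(Xu)(Xu)ᵀ = u uᵀ` and `X Q Xᵀ = Q`, and a rank-one matrix `v vᵀ` determines `v` up to sign.
-/

open Matrix

namespace Matrix

variable {l n R α : Type*}

theorem mul_vecMulVec_mul_transpose [Fintype n] [CommSemiring R] (X : Matrix l n R)
    (u v : n → R) : X * vecMulVec u v * Xᵀ = vecMulVec (X *ᵥ u) (X *ᵥ v) := by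
  rw [mul_vecMulVec, vecMulVec_mul, vecMul_transpose]

theorem transpose_mul_mul_transpose_of_transpose_eq_neg [Fintype n] [CommRing R]
    (X : Matrix l n R) {Q : Matrix n n R} (hQ : Qᵀ = -Q) : (X * Q * Xᵀ)ᵀ = -(X * Q * Xᵀ) := by
  rw [transpose_mul, transpose_mul, transpose_transpose, hQ, ← Matrix.mul_assoc, Matrix.mul_neg,
    Matrix.neg_mul]

theorem vecMulVec_self_eq_vecMulVec_self_iff [CommRing R] [NoZeroDivisors R] {u v : n → R} :
    vecMulVec v v = vecMulVec u u ↔ v = u ∨ v = -u := by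
  refine ⟨fun h => ?_, by rintro (rfl | rfl) <;> simp [neg_vecMulVec, vecMulVec_neg]⟩
  obtain rfl | ⟨i, hi⟩ := eq_or_ne u 0 |>.imp_right Function.ne_iff.mp
  · simpa using h
  have hrow : v i • v = u i • u := congr(row $h i)
  obtain hvi | hvi := mul_self_eq_mul_self_iff.mp congr($h i i)
  · rw [hvi] at hrow
    exact .inl (smul_right_injective _ hi hrow)
  · rw [hvi, neg_smul, ← smul_neg] at hrow
    exact .inr (neg_eq_iff_eq_neg.mp (smul_right_injective _ hi hrow))

theorem add_eq_add_iff_of_isSymm_of_transpose_eq_neg [AddCommGroup α] [IsAddTorsionFree α]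
    {S S' K K' : Matrix n n α} (hS : S.IsSymm) (hS' : S'.IsSymm) (hK : Kᵀ = -K)
    (hK' : K'ᵀ = -K') : S + K = S' + K' ↔ S = S' ∧ K = K' := by
  refine ⟨fun h => ?_, fun ⟨hSS', hKK'⟩ => hSS' ▸ hKK' ▸ rfl⟩
  have hsub : S - K = S' - K' := by
    simpa [hS.eq, hS'.eq, hK, hK', sub_eq_add_neg] using congr($h ᵀ)
  have hdouble : S + S = S' + S' :=
    calc S + S = (S + K) + (S - K) := by abel
      _ = (S' + K') + (S' - K') := by rw [h, hsub]
      _ = S' + S' := by abel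
  have hSS' : S = S' := by
    ext i j
    exact nsmul_right_injective two_ne_zero (by simpa [two_nsmul] using congr($hdouble i j))
  exact ⟨hSS', add_left_cancel (hSS' ▸ h)⟩

end Matrix

/-- For `C = u uᵀ + Q` with `Q` skew-symmetric, a matrix `X` satisfies
`X C Xᵀ = C` if and only if `Xu = ±u` and `X Q Xᵀ = Q`. -/
theorem congruence_stabilizer_of_core_matrix (m : ℕ) (u : Fin m → ℝ)
    (Q : Matrix (Fin m) (Fin m) ℝ) (hQ : Qᵀ = -Q)
    (X : Matrix (Fin m) (Fin m) ℝ) :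
    X * (Matrix.vecMulVec u u + Q) * Xᵀ = Matrix.vecMulVec u u + Q ↔
      ((X.mulVec u = u ∨ X.mulVec u = -u) ∧ X * Q * Xᵀ = Q) := by
  rw [Matrix.mul_add, Matrix.add_mul, mul_vecMulVec_mul_transpose,
    add_eq_add_iff_of_isSymm_of_transpose_eq_neg (transpose_vecMulVec _ _)
      (transpose_vecMulVec _ _) (transpose_mul_mul_transpose_of_transpose_eq_neg X hQ) hQ,
    vecMulVec_self_eq_vecMulVec_self_iff]
end

section
/- Let C_axis ∈ ℝ^{m×m×m} be the axis core tensor with entries c_{ijk}, and let v ∈ ℝ^m be the vector with coordinates v_j = (−1)^{m+j}. Then the m×m matrix D with entries D_{ik} = Σ_{j=1}^m c_{ijk} v_j is diagonal; explicitly, Σ_{j=1}^m (−1)^{m+j} c_{ijk} = 0 whenever i ≠ k, and Σ_{j=1}^m (−1)^{m+j} c_{iji} = (−1)^{m+i}/6 for every i. -/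
/-! For `i < k` the slice `j ↦ c_{ijk}` carries the trapezoid-rule weights `1/2, 1, …, 1, 1/2`
on `[i, k]`, i.e. the average of the indicators of `[i, k)` and `(i, k]`. The two alternating
sums over these intervals cancel, since shifting `[i, k)` by one flips every sign. On the
diagonal only `j = i` contributes, with weight `1/6`. -/

/-- The axis core tensor over `ℝ`. -/
noncomputable def caxis (m : ℕ) : Fin m → Fin m → Fin m → ℝ := fun i j k =>
  if i < j ∧ j < k then 1
  else if (i < j ∧ j = k) ∨ (i = j ∧ j < k) then 1 / 2
  else if i = j ∧ j = k then 1 / 6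
  else 0

open Finset

lemma sum_Ico_neg_one_pow_add_sum_Ioc {R : Type*} [Ring R] (a b : ℕ) :
    ∑ j ∈ Ico a b, (-1 : R) ^ j + ∑ j ∈ Ioc a b, (-1 : R) ^ j = 0 := by
  rw [← Ico_add_one_add_one_eq_Ioc, ← sum_Ico_add', ← sum_add_distrib]
  exact sum_eq_zero fun j _ => by rw [pow_succ, mul_neg_one, add_neg_cancel]

lemma Fin.sum_Ico_neg_one_pow_add_sum_Ioc {R : Type*} [Ring R] {m : ℕ} (a b : Fin m) :
    ∑ j ∈ Ico a b, (-1 : R) ^ (j : ℕ) + ∑ j ∈ Ioc a b, (-1 : R) ^ (j : ℕ) = 0 := by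
  have h := _root_.sum_Ico_neg_one_pow_add_sum_Ioc (R := R) a b
  rwa [← Fin.map_valEmbedding_Ico, ← Fin.map_valEmbedding_Ioc, sum_map, sum_map] at h

lemma caxis_of_lt {m : ℕ} {i k : Fin m} (hik : i < k) (j : Fin m) :
    caxis m i j k =
      ((if j ∈ Ico i k then 1 else 0) + (if j ∈ Ioc i k then 1 else 0)) / 2 := by
  simp only [caxis, mem_Ico, mem_Ioc, Fin.lt_def, Fin.le_def, Fin.ext_iff] at hik ⊢
  split_ifs <;> first | omega | norm_num

lemma caxis_of_gt {m : ℕ} {i k : Fin m} (hki : k < i) (j : Fin m) : caxis m i j k = 0 := by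
  simp only [caxis]
  split_ifs <;> first | rfl | omega

lemma caxis_diag {m : ℕ} (i j : Fin m) : caxis m i j i = if j = i then 1 / 6 else 0 := by
  simp only [caxis]
  split_ifs <;> first | rfl | omega

lemma sum_neg_one_pow_mul_caxis_of_lt {m : ℕ} {i k : Fin m} (hik : i < k) :
    ∑ j : Fin m, (-1 : ℝ) ^ (j : ℕ) * caxis m i j k = 0 := by
  simp only [caxis_of_lt hik, mul_div_assoc', mul_add, mul_ite, mul_one, mul_zero,
    ← sum_div, sum_add_distrib, sum_ite_mem, univ_inter, Fin.sum_Ico_neg_one_pow_add_sum_Ioc,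
    zero_div]

/-- Contracting the axis core tensor along its second index with the alternating
vector `v_j = (−1)^{m+j}` (indices `1,…,m`) yields a diagonal matrix with diagonal
entries `(−1)^{m+i}/6`. Here Fin-indices are 0-based, so the exponent is `m+j+1`. -/
theorem axis_contraction_alternating_vector_diagonal (m : ℕ) :
    (∀ i k : Fin m, i ≠ k →
        ∑ j : Fin m, (-1 : ℝ) ^ (m + (j : ℕ) + 1) * caxis m i j k = 0) ∧
    (∀ i : Fin m,
        ∑ j : Fin m, (-1 : ℝ) ^ (m + (j : ℕ) + 1) * caxis m i j i
          = (-1 : ℝ) ^ (m + (i : ℕ) + 1) / 6) := by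
  refine ⟨fun i k hik => ?_, fun i => ?_⟩
  · rcases hik.lt_or_gt with hlt | hgt
    · have hfactor : ∀ j : Fin m, (-1 : ℝ) ^ (m + (j : ℕ) + 1) * caxis m i j k =
          (-1) ^ (m + 1) * ((-1) ^ (j : ℕ) * caxis m i j k) := fun j => by ring
      rw [sum_congr rfl fun j _ => hfactor j, ← mul_sum, sum_neg_one_pow_mul_caxis_of_lt hlt,
        mul_zero]
    · exact sum_eq_zero fun j _ => by rw [caxis_of_gt hgt, mul_zero]
  · simp only [caxis_diag, mul_ite, mul_zero, sum_ite_eq', mem_univ, if_true]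
    ring
end
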